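/- Let ν ≠ 0 be real and let m, n ≥ 0 be integers. With κ = 0, so that (∇_ν f)(z) = −(∂f/∂z)(z) + ν z̄ f(z), one has for every z ∈ ℂ: e^{ν|z|²} · (∇_ν ∘ ⋯ ∘ ∇_ν)_{m times}[w ↦ e^{−ν|w|²} w^n](z) = (−1)^m e^{2ν|z|²} (∂^m/∂z^m)[w ↦ e^{−2ν|w|²} w^n](z) = H_{m,n}^ν(z), where H_{m,n}^ν(z) = ((−1)^{m+n}/(2ν)^n) · e^{2ν|z|²} · (∂^{m+n}/∂z^m∂z̄^n)[w ↦ e^{−2ν|w|²}](z) is the complex Hermite polynomial. -/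

import Mathlib

open Complex MeasureTheory Filter

/-- Wirtinger derivative ∂f/∂z = (1/2)(∂f/∂x − i ∂f/∂y). -/
noncomputable def wderiv (f : ℂ → ℂ) (z : ℂ) : ℂ :=
  (fderiv ℝ f z 1 - Complex.I * fderiv ℝ f z Complex.I) / 2

/-- Anti-holomorphic Wirtinger derivative ∂f/∂z̄ = (1/2)(∂f/∂x + i ∂f/∂y). -/
noncomputable def wderivBar (f : ℂ → ℂ) (z : ℂ) : ℂ :=
  (fderiv ℝ f z 1 + Complex.I * fderiv ℝ f z Complex.I) / 2

/-- Twisted Laplacian L_κ^ν. -/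
noncomputable def twistedLap (κ ν : ℝ) (f : ℂ → ℂ) (z : ℂ) : ℂ :=
  -(((1 + κ * Complex.normSq z : ℝ) : ℂ) ^ 2 * wderiv (wderivBar f) z
    + (ν : ℂ) * ((1 + κ * Complex.normSq z : ℝ) : ℂ) *
        (z * wderiv f z - (starRingEnd ℂ) z * wderivBar f z)
    - (ν : ℂ) ^ 2 * ((Complex.normSq z : ℝ) : ℂ) * f z)

/-- (∇_α f)(z) = −(1+κ|z|²) ∂f/∂z + α z̄ f(z). -/
noncomputable def nabla (κ α : ℝ) (f : ℂ → ℂ) (z : ℂ) : ℂ :=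
  -((1 + κ * Complex.normSq z : ℝ) : ℂ) * wderiv f z + (α : ℂ) * (starRingEnd ℂ) z * f z

/-- (∇*_α f)(z) = (1+κ|z|²) ∂f/∂z̄ + (α−κ) z f(z). -/
noncomputable def nablaStar (κ α : ℝ) (f : ℂ → ℂ) (z : ℂ) : ℂ :=
  ((1 + κ * Complex.normSq z : ℝ) : ℂ) * wderivBar f z + ((α - κ : ℝ) : ℂ) * z * f z

/-- ∇_{ν+κ} ∘ ∇_{ν+2κ} ∘ ⋯ ∘ ∇_{ν+mκ} (the identity when m = 0). -/
noncomputable def nablaChain (κ : ℝ) : ℕ → ℝ → (ℂ → ℂ) → (ℂ → ℂ)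
  | 0, _, f => f
  | m + 1, ν, f => nabla κ (ν + κ) (nablaChain κ m (ν + κ) f)

/-- (D g)(z) = (1+κ|z|²)² ∂g/∂z. -/
noncomputable def Dop (κ : ℝ) (g : ℂ → ℂ) (z : ℂ) : ℂ :=
  ((1 + κ * Complex.normSq z : ℝ) : ℂ) ^ 2 * wderiv g z

/-- Generalized binomial coefficient C(r,k) for real r. -/
noncomputable def genBinom (r : ℝ) (k : ℕ) : ℝ :=
  (∏ i ∈ Finset.range k, (r - i)) / (Nat.factorial k)

/-- Jacobi polynomial P_j^{(a,b)}(x) with real parameters a, b. -/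
noncomputable def jacobiP (a b : ℝ) (j : ℕ) (x : ℝ) : ℝ :=
  ∑ s ∈ Finset.range (j + 1),
    genBinom ((j : ℝ) + a) (j - s) * genBinom ((j : ℝ) + b) s *
      ((x - 1) / 2) ^ s * ((x + 1) / 2) ^ (j - s)

/-- Pochhammer symbol (a)_n = a(a+1)⋯(a+n−1). -/
noncomputable def risingFactorial (a : ℝ) (n : ℕ) : ℝ :=
  ∏ i ∈ Finset.range n, (a + i)

/-!
Conjugation by the Gaussian `e^{-β|z|²}` turns `∇_α` (with `κ = 0`) into the creation operator
`h ↦ -∂h + (α + β) z̄ h`, which preserves smooth functions. Taking `(α, β) = (ν, ν)`, and, since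
`-∂ = ∇_0`, `(α, β) = (0, 2ν)`, both sides of the first identity become
`(-∂ + 2ν z̄)^m` applied to `z^n`. For the second, `∂̄^n e^{-2ν|z|²} = (-2ν)^n z^n e^{-2ν|z|²}`
and `∂` commutes with constant multiples.
-/

open scoped ContDiff ComplexConjugate

lemma iterate_apply_of_semiconjOn {α β : Type*} {s : Set α} {F : α → β} {Φ : β → β}
    {Ψ : α → α} (hΨ : Set.MapsTo Ψ s s) (hF : ∀ x ∈ s, Φ (F x) = F (Ψ x)) (m : ℕ) :
    ∀ x ∈ s, Φ^[m] (F x) = F (Ψ^[m] x) := by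
  induction m with
  | zero => simp
  | succ m ih =>
    intro x hx
    rw [Function.iterate_succ_apply, Function.iterate_succ_apply, hF x hx, ih _ (hΨ hx)]

section Wirtinger

variable {f g : ℂ → ℂ} {z : ℂ}

lemma wderiv_const_smul (c : ℂ) (f : ℂ → ℂ) : wderiv (c • f) = c • wderiv f := by
  ext z
  simp only [wderiv, fderiv_const_smul_field, Pi.smul_apply, smul_apply, smul_eq_mul]
  ring

lemma wderivBar_const_smul (c : ℂ) (f : ℂ → ℂ) : wderivBar (c • f) = c • wderivBar f := by
  ext z
  simp only [wderivBar, fderiv_const_smul_field, Pi.smul_apply, smul_apply, smul_eq_mul]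
  ring

lemma wderiv_mul (hf : DifferentiableAt ℝ f z) (hg : DifferentiableAt ℝ g z) :
    wderiv (fun w => f w * g w) z = wderiv f z * g z + f z * wderiv g z := by
  simp only [wderiv, fderiv_fun_mul hf hg, add_apply, smul_apply, smul_eq_mul]
  ring

lemma wderivBar_mul (hf : DifferentiableAt ℝ f z) (hg : DifferentiableAt ℝ g z) :
    wderivBar (fun w => f w * g w) z = wderivBar f z * g z + f z * wderivBar g z := by
  simp only [wderivBar, fderiv_fun_mul hf hg, add_apply, smul_apply, smul_eq_mul]
  ring

lemma wderiv_cexp (hf : DifferentiableAt ℝ f z) :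
    wderiv (fun w => cexp (f w)) z = cexp (f z) * wderiv f z := by
  simp only [wderiv, hf.hasFDerivAt.cexp.fderiv, smul_apply, smul_eq_mul]
  ring

lemma wderivBar_cexp (hf : DifferentiableAt ℝ f z) :
    wderivBar (fun w => cexp (f w)) z = cexp (f z) * wderivBar f z := by
  simp only [wderivBar, hf.hasFDerivAt.cexp.fderiv, smul_apply, smul_eq_mul]
  ring

lemma wderivBar_eq_zero_of_differentiableAt (hf : DifferentiableAt ℂ f z) :
    wderivBar f z = 0 := by
  have hI : fderiv ℂ f z I = I * fderiv ℂ f z 1 := by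
    simpa only [smul_eq_mul, mul_one] using (fderiv ℂ f z).map_smul I 1
  rw [wderivBar, hf.fderiv_restrictScalars ℝ, ContinuousLinearMap.coe_restrictScalars', hI,
    ← mul_assoc, I_mul_I]
  ring

lemma wderiv_id (z : ℂ) : wderiv (fun w => w) z = 1 := by
  simp [wderiv, I_mul_I]

lemma fderiv_conj (z : ℂ) : fderiv ℝ (fun w => conj w) z = conjCLE.toContinuousLinearMap :=
  conjCLE.fderiv

lemma wderiv_conj (z : ℂ) : wderiv (fun w => conj w) z = 0 := by
  simp [wderiv, fderiv_conj]

lemma wderivBar_conj (z : ℂ) : wderivBar (fun w => conj w) z = 1 := by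
  simp [wderivBar, fderiv_conj]

lemma differentiable_ofReal_normSq : Differentiable ℝ (fun w => (normSq w : ℂ)) := by
  simp_rw [← mul_conj]
  exact differentiable_id.mul differentiable_conj

lemma wderiv_ofReal_normSq (z : ℂ) : wderiv (fun w => (normSq w : ℂ)) z = conj z := by
  simp_rw [← mul_conj]
  rw [wderiv_mul differentiableAt_fun_id differentiable_conj.differentiableAt, wderiv_id,
    wderiv_conj]
  ring

lemma wderivBar_ofReal_normSq (z : ℂ) : wderivBar (fun w => (normSq w : ℂ)) z = z := by
  simp_rw [← mul_conj]
  rw [wderivBar_mul differentiableAt_fun_id differentiable_conj.differentiableAt,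
    wderivBar_eq_zero_of_differentiableAt differentiableAt_fun_id, wderivBar_conj]
  ring

lemma ContDiff.wderiv (hf : ContDiff ℝ ∞ f) : ContDiff ℝ ∞ (wderiv f) := by
  have := hf.fderiv_right (m := ∞) le_rfl
  unfold _root_.wderiv
  fun_prop

end Wirtinger

section Gaussian

variable (β : ℂ)

lemma differentiable_gaussian_exponent : Differentiable ℝ (fun w => -(β * (normSq w : ℂ))) :=
  (differentiable_ofReal_normSq.const_mul β).neg

lemma gaussian_exponent_eq_smul :
    (fun w => -(β * (normSq w : ℂ))) = (-β) • fun w => (normSq w : ℂ) := by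
  ext; simp

lemma differentiable_gaussian : Differentiable ℝ (fun w => cexp (-(β * normSq w))) :=
  (differentiable_gaussian_exponent β).cexp

lemma wderiv_gaussian (z : ℂ) :
    wderiv (fun w => cexp (-(β * normSq w))) z = -β * conj z * cexp (-(β * normSq z)) := by
  rw [wderiv_cexp (differentiable_gaussian_exponent β z), gaussian_exponent_eq_smul,
    wderiv_const_smul, Pi.smul_apply, wderiv_ofReal_normSq, smul_eq_mul]
  ring

lemma wderivBar_gaussian (z : ℂ) :
    wderivBar (fun w => cexp (-(β * normSq w))) z = -β * z * cexp (-(β * normSq z)) := by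
  rw [wderivBar_cexp (differentiable_gaussian_exponent β z),
    gaussian_exponent_eq_smul, wderivBar_const_smul, Pi.smul_apply, wderivBar_ofReal_normSq,
    smul_eq_mul]
  ring

lemma iterate_wderivBar_gaussian (n : ℕ) :
    wderivBar^[n] (fun w => cexp (-(β * normSq w)))
      = (-β) ^ n • fun w => cexp (-(β * normSq w)) * w ^ n := by
  induction n with
  | zero => ext; simp
  | succ n ih =>
    ext z
    rw [Function.iterate_succ_apply', ih, wderivBar_const_smul, Pi.smul_apply, Pi.smul_apply,
      wderivBar_mul (differentiable_gaussian β z) (by fun_prop),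
      wderivBar_eq_zero_of_differentiableAt (f := fun w => w ^ n) (by fun_prop),
      wderivBar_gaussian, smul_eq_mul, smul_eq_mul]
    ring

end Gaussian

-- `H^ν_{m,n} = (creationOp (2ν))^[m] (z ↦ z^n)`.
noncomputable def creationOp (μ : ℂ) (h : ℂ → ℂ) (z : ℂ) : ℂ :=
  -wderiv h z + μ * conj z * h z

lemma ContDiff.creationOp {h : ℂ → ℂ} (μ : ℂ) (hh : ContDiff ℝ ∞ h) :
    ContDiff ℝ ∞ (creationOp μ h) := by
  have := hh.wderiv
  have : ContDiff ℝ ∞ fun w : ℂ => conj w := conjCLE.contDiff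
  unfold _root_.creationOp
  fun_prop

lemma nabla_gaussian_mul (α : ℝ) (β : ℂ) {h : ℂ → ℂ} {z : ℂ} (hh : DifferentiableAt ℝ h z) :
    nabla 0 α (fun w => cexp (-(β * normSq w)) * h w) z
      = cexp (-(β * normSq z)) * creationOp (α + β) h z := by
  rw [nabla, creationOp, wderiv_mul (differentiable_gaussian β z) hh, wderiv_gaussian]
  push_cast
  ring

lemma iterate_nabla_gaussian_mul (α : ℝ) (β : ℂ) {h : ℂ → ℂ} (hh : ContDiff ℝ ∞ h) (m : ℕ) :
    (nabla 0 α)^[m] (fun w => cexp (-(β * normSq w)) * h w)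
      = fun w => cexp (-(β * normSq w)) * (creationOp (α + β))^[m] h w :=
  iterate_apply_of_semiconjOn (s := {h | ContDiff ℝ ∞ h})
    (F := fun h w => cexp (-(β * normSq w)) * h w)
    (fun _ (hh : ContDiff ℝ ∞ _) => hh.creationOp _)
    (fun _ (hh : ContDiff ℝ ∞ _) =>
      funext fun _ => nabla_gaussian_mul α β (hh.differentiable (by simp) _))
    m h hh

lemma nabla_zero_zero : nabla 0 0 = fun f => (-1 : ℂ) • wderiv f := by
  ext f z
  simp [nabla]

lemma iterate_nabla_zero_zero (m : ℕ) (f : ℂ → ℂ) :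
    (nabla 0 0)^[m] f = (-1 : ℂ) ^ m • wderiv^[m] f := by
  have hcomm : Function.Commute ((-1 : ℂ) • · : (ℂ → ℂ) → (ℂ → ℂ)) wderiv :=
    fun f => (wderiv_const_smul _ f).symm
  rw [nabla_zero_zero, show (fun f => (-1 : ℂ) • wderiv f) = ((-1 : ℂ) • ·) ∘ wderiv from rfl,
    hcomm.comp_iterate, Function.comp_apply, smul_iterate_apply]

lemma iterate_wderiv_const_smul (m : ℕ) (c : ℂ) (f : ℂ → ℂ) :
    wderiv^[m] (c • f) = c • wderiv^[m] f :=
  (Function.Commute.iterate_left (fun f => wderiv_const_smul c f) m) f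

theorem stmt18 (ν : ℝ) (hν : ν ≠ 0) (m n : ℕ) (z : ℂ) :
    Complex.exp ((ν : ℂ) * (Complex.normSq z : ℂ)) *
        (nabla 0 ν)^[m]
          (fun w => Complex.exp (-((ν : ℂ) * (Complex.normSq w : ℂ))) * w ^ n) z
      = (-1 : ℂ) ^ m * Complex.exp (2 * (ν : ℂ) * (Complex.normSq z : ℂ)) *
          wderiv^[m]
            (fun w => Complex.exp (-(2 * (ν : ℂ) * (Complex.normSq w : ℂ))) * w ^ n) z ∧
    (-1 : ℂ) ^ m * Complex.exp (2 * (ν : ℂ) * (Complex.normSq z : ℂ)) *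
        wderiv^[m]
          (fun w => Complex.exp (-(2 * (ν : ℂ) * (Complex.normSq w : ℂ))) * w ^ n) z
      = ((-1 : ℂ) ^ (m + n) / (2 * (ν : ℂ)) ^ n) *
          Complex.exp (2 * (ν : ℂ) * (Complex.normSq z : ℂ)) *
          wderiv^[m] (wderivBar^[n]
            (fun w => Complex.exp (-(2 * (ν : ℂ) * (Complex.normSq w : ℂ))))) z := by
  have hp : ContDiff ℝ ∞ fun w : ℂ => w ^ n := by fun_prop
  have cancel (β : ℂ) : cexp (β * normSq z) * cexp (-(β * normSq z)) = 1 := by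
    rw [← exp_add, add_neg_cancel, exp_zero]
  have h_nabla := iterate_nabla_gaussian_mul ν ν hp m
  rw [← two_mul] at h_nabla
  have h_wderiv := congrFun (iterate_nabla_gaussian_mul 0 (2 * ν) hp m) z
  rw [iterate_nabla_zero_zero, Pi.smul_apply, smul_eq_mul, ofReal_zero, zero_add] at h_wderiv
  refine ⟨?_, ?_⟩
  · rw [h_nabla, ← mul_assoc, cancel, one_mul, mul_comm ((-1 : ℂ) ^ m), mul_assoc, h_wderiv,
      ← mul_assoc, cancel, one_mul]
  · rw [iterate_wderivBar_gaussian, iterate_wderiv_const_smul, Pi.smul_apply, smul_eq_mul,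
      neg_pow (2 * (ν : ℂ)), pow_add]
    have hν' : (ν : ℂ) ≠ 0 := ofReal_ne_zero.2 hν
    field_simp
    rw [← pow_mul, pow_mul', neg_one_sq, one_pow, mul_one]
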